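/- Let ψ_d be the density of one coordinate of a uniformly random point on the unit sphere S^{d−1} ⊂ ℝ^d. For all t with 0 ≤ t ≤ 1/2 and all δ with 0 ≤ δ ≤ t, it holds that ψ_d(t−δ)/ψ_d(t) ≤ e^{2tdδ}. -/
import Mathlib


open MeasureTheory Filter

noncomputable section

/-- The marginal density `ψ_d` on `[-1,1]` of a single coordinate of a uniform point on
the unit sphere `S^{d-1} ⊆ ℝ^d`:
`ψ_d(x) = Γ(d/2)/(Γ((d-1)/2)√π) · (1-x²)^{(d-3)/2}`. -/
def psi (d : ℕ) (x : ℝ) : ℝ :=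
  Real.Gamma ((d : ℝ) / 2) / (Real.Gamma (((d : ℝ) - 1) / 2) * Real.sqrt Real.pi) *
    (1 - x ^ 2) ^ (((d : ℝ) - 3) / 2)

/-- For `0 ≤ t ≤ 1/2` and `0 ≤ δ ≤ t`,
`ψ_d(t-δ)/ψ_d(t) ≤ e^{2tdδ}`. -/
theorem psi_ratio_bound (d : ℕ) (hd : 2 ≤ d) (t δ : ℝ)
    (ht0 : 0 ≤ t) (ht : t ≤ 1 / 2) (hδ0 : 0 ≤ δ) (hδ : δ ≤ t) :
    psi d (t - δ) / psi d t ≤ Real.exp (2 * t * (d : ℝ) * δ) := by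
  have hts : 0 ≤ t - δ := by linarith
  have hB : (3:ℝ)/4 ≤ 1 - t ^ 2 := by nlinarith
  have hB0 : (0:ℝ) < 1 - t ^ 2 := by linarith
  have hA0 : (0:ℝ) < 1 - (t - δ) ^ 2 := by nlinarith
  have hBA : 1 - t ^ 2 ≤ 1 - (t - δ) ^ 2 := by nlinarith
  have hC : 0 < Real.Gamma ((d : ℝ) / 2) / (Real.Gamma (((d : ℝ) - 1) / 2) * Real.sqrt Real.pi) := by
    have hd2 : (2:ℝ) ≤ (d:ℝ) := by exact_mod_cast hd
    apply div_pos (Real.Gamma_pos_of_pos (by linarith))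
    exact mul_pos (Real.Gamma_pos_of_pos (by linarith))
      (Real.sqrt_pos.mpr Real.pi_pos)
  set e : ℝ := ((d : ℝ) - 3) / 2 with he
  have hratio : psi d (t - δ) / psi d t = ((1 - (t - δ) ^ 2) / (1 - t ^ 2)) ^ e := by
    rw [psi, psi, mul_div_mul_left _ _ (ne_of_gt hC), Real.div_rpow hA0.le hB0.le]
  rw [hratio]
  have hq0 : 0 < (1 - (t - δ) ^ 2) / (1 - t ^ 2) := div_pos hA0 hB0
  have hq1 : 1 ≤ (1 - (t - δ) ^ 2) / (1 - t ^ 2) := (one_le_div hB0).mpr hBA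
  rw [Real.rpow_def_of_pos hq0, Real.exp_le_exp]
  have hlog1 : Real.log ((1 - (t - δ) ^ 2) / (1 - t ^ 2)) ≤
      (1 - (t - δ) ^ 2) / (1 - t ^ 2) - 1 := Real.log_le_sub_one_of_pos hq0
  have hlog0 : 0 ≤ Real.log ((1 - (t - δ) ^ 2) / (1 - t ^ 2)) := Real.log_nonneg hq1
  rcases le_or_gt ((d:ℝ)) 3 with hd3 | hd3
  · -- e ≤ 0, so e * log ≤ 0 ≤ RHS
    have he0 : e ≤ 0 := by rw [he]; linarith
    have : Real.log ((1 - (t - δ) ^ 2) / (1 - t ^ 2)) * e ≤ 0 :=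
      mul_nonpos_of_nonneg_of_nonpos hlog0 he0
    have hrhs : 0 ≤ 2 * t * (d : ℝ) * δ := by positivity
    linarith
  · have he0 : 0 ≤ e := by rw [he]; linarith
    have hdiff : (1 - (t - δ) ^ 2) / (1 - t ^ 2) - 1 ≤ 8/3 * (t * δ) := by
      rw [div_sub_one (ne_of_gt hB0), div_le_iff₀ hB0]
      nlinarith [sq_nonneg δ, mul_le_mul_of_nonneg_left hB (mul_nonneg ht0 hδ0)]
    have hlog2 : Real.log ((1 - (t - δ) ^ 2) / (1 - t ^ 2)) ≤ 8/3 * (t * δ) := by linarith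
    calc Real.log ((1 - (t - δ) ^ 2) / (1 - t ^ 2)) * e ≤ 8/3 * (t * δ) * e :=
          mul_le_mul_of_nonneg_right hlog2 he0
      _ ≤ 2 * t * (d : ℝ) * δ := by rw [he]; nlinarith [mul_nonneg ht0 hδ0]
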